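/- For every integer m ≥ 1 and every real g with 0 < g < 1/4, one has U_m(1/(2√g)) ≠ 0 and X_m(g) = √g · U_{m−1}(1/(2√g)) / U_m(1/(2√g)), where U_m denotes the m-th Chebyshev polynomial of the second kind. -/

import Mathlib

/-!
With `s = √g` and `x = 1/(2s)`, the three-term recurrence `U_{m+1}(x) = 2x U_m(x) - U_{m-1}(x)`
reads `s U_{m+1} = U_m - s U_{m-1}`, which says exactly that `s U_{m-1}/U_m` is carried to
`s U_m/U_{m+1}` by the map `X ↦ s²/(1 - X)` defining `X_{m+1}` from `X_m`; the starting value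
`s U_{-1}/U_0 = 0` is `X_0`. Since `g < 1/4` means `x > 1`, and `U_m` is positive and increasing
in `m` on `[1, ∞)`, no denominator vanishes.
-/

open scoped Real BigOperators

/-- The generating functions `X_m` of rooted planar trees of height at most `m`:
`X_0 = 0`, `X_1(g) = g`, `X_m(g) = g/(1 - X_{m-1}(g))`. -/
noncomputable def Xc : ℕ → ℂ → ℂ
  | 0, _ => 0
  | (m + 1), g => g / (1 - Xc m g)

namespace Polynomial.Chebyshev

variable {R : Type*} [CommRing R] [LinearOrder R] [IsStrictOrderedRing R]

-- For `x ≥ 1` the recurrence gives `U_{n+1} - U_n = (2x - 2) U_n + (U_n - U_{n-1}) > 0`.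
theorem U_eval_nonneg_and_lt_of_one_le {x : R} (hx : 1 ≤ x) (n : ℕ) :
    0 ≤ (U R ((n : ℤ) - 1)).eval x ∧ (U R ((n : ℤ) - 1)).eval x < (U R n).eval x := by
  induction n with
  | zero => simp
  | succ n ih =>
    obtain ⟨h_prev_nonneg, h_prev_lt⟩ := ih
    have hrec : (U R ((n : ℤ) + 1)).eval x =
        2 * x * (U R n).eval x - (U R ((n : ℤ) - 1)).eval x := by
      simp [U_add_one]
    push_cast
    rw [add_sub_cancel_right, hrec]
    constructor <;> nlinarith

theorem U_eval_pos_of_one_le {x : R} (hx : 1 ≤ x) (n : ℕ) : 0 < (U R n).eval x :=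
  let h := U_eval_nonneg_and_lt_of_one_le hx n
  h.1.trans_lt h.2

end Polynomial.Chebyshev

open Polynomial Polynomial.Chebyshev

theorem Xc_sq_eq_mul_U_eval_div_U_eval {s x : ℂ} (hsx : 2 * s * x = 1) (m : ℕ)
    (hU : ∀ n ≤ m, (U ℂ n).eval x ≠ 0) :
    Xc m (s ^ 2) = s * (U ℂ ((m : ℤ) - 1)).eval x / (U ℂ m).eval x := by
  induction m with
  | zero => simp [Xc]
  | succ m ih =>
    have hs : s ≠ 0 := by rintro rfl; simp at hsx
    set a := (U ℂ ((m : ℤ) - 1)).eval x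
    set b := (U ℂ m).eval x
    set c := (U ℂ ((m : ℤ) + 1)).eval x
    have hb : b ≠ 0 := hU m m.le_succ
    have hc : c ≠ 0 := by exact_mod_cast hU (m + 1) le_rfl
    have hrec : c = 2 * x * b - a := by simp [c, b, a, U_add_one]
    have hdenom : 1 - s * a / b = s * c / b := by
      rw [one_sub_div hb]
      congr 1
      linear_combination (-b) * hsx - s * hrec
    rw [Xc, ih fun n hn => hU n (hn.trans m.le_succ), hdenom]
    push_cast
    rw [add_sub_cancel_right]
    change s ^ 2 / (s * c / b) = s * b / c
    field_simp

theorem Xc_eq_chebyshevU (m : ℕ) (g : ℝ) (hg0 : 0 < g) (hg : g < 1 / 4) :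
    Polynomial.eval (1 / (2 * Real.sqrt g)) (Polynomial.Chebyshev.U ℝ (m : ℤ)) ≠ 0 ∧
      Xc m (g : ℂ) =
        ((Real.sqrt g *
            Polynomial.eval (1 / (2 * Real.sqrt g)) (Polynomial.Chebyshev.U ℝ ((m : ℤ) - 1)) /
            Polynomial.eval (1 / (2 * Real.sqrt g)) (Polynomial.Chebyshev.U ℝ (m : ℤ)) : ℝ) : ℂ) := by
  have hs : 0 < √g := Real.sqrt_pos.mpr hg0
  set x := 1 / (2 * √g)
  have hx : 1 ≤ x := by
    rw [le_div_iff₀ (by positivity), one_mul]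
    nlinarith [Real.sq_sqrt hg0.le]
  have hsx : 2 * √g * x = 1 := mul_one_div_cancel (by positivity)
  have hU (n : ℕ) : 0 < (U ℝ n).eval x := U_eval_pos_of_one_le hx n
  refine ⟨(hU m).ne', ?_⟩
  have hg_sq : (g : ℂ) = (√g : ℂ) ^ 2 := by rw [← Complex.ofReal_pow, Real.sq_sqrt hg0.le]
  rw [hg_sq, Xc_sq_eq_mul_U_eval_div_U_eval (s := √g) (x := x) (by exact_mod_cast hsx) m
    fun n _ => by exact_mod_cast (hU n).ne']
  push_cast
  rfl
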